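/- Consider the workflow net N with places {i, u, d, f} and transitions t_i (consumes 1 from i, produces 1 in u and 1 in d), t_u (consumes c from u and 1 from d, produces 1 in f), and t_d (consumes 2 from d, produces 1 in d and 1 in f), where c ≥ 2. Then N is k-quasi-sound if and only if k is a positive multiple of c, and N is not structurally sound. -/

import Mathlib

/-!
The marking equation, read at the places `i` and `u`, shows that a run from `k·i` to `k·f` fires
`t_i` exactly `k` times and `t_u` exactly `k / c` times, so `c ∣ k`. Conversely, for `k = m c`, after
`t_i^k` the transition `t_d` burns the `k - m` surplus tokens of `d`, leaving one for each of the `m`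
firings of `t_u`. Firing `t_u^m` before `t_d` instead empties `u` while `d` keeps `k - m ≥ 1` tokens
(as `c ≥ 2`), and `t_d^{k-m-1}` then reaches the dead marking `d + (k-1)·f`, so the net is `k`-sound
for no `k`.
-/

structure PetriNet (P T : Type) [Fintype P] [Fintype T] where
  pre : T → P → ℕ
  post : T → P → ℕ

variable {P T : Type} [Fintype P] [Fintype T] [DecidableEq P]

namespace PetriNet

def enabled (N : PetriNet P T) (t : T) (m : P → ℕ) : Prop := ∀ p, N.pre t p ≤ m p

def fires (N : PetriNet P T) (m m' : P → ℕ) : Prop :=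
  ∃ t, N.enabled t m ∧ ∀ p, m' p = m p + N.post t p - N.pre t p

def reach (N : PetriNet P T) : (P → ℕ) → (P → ℕ) → Prop := Relation.ReflTransGen N.fires

def zfires (N : PetriNet P T) (m m' : P → ℤ) : Prop :=
  ∃ t, ∀ p, m' p = m p + (N.post t p : ℤ) - (N.pre t p : ℤ)

def zreach (N : PetriNet P T) : (P → ℤ) → (P → ℤ) → Prop := Relation.ReflTransGen N.zfires

def cfires (N : PetriNet P T) (m m' : P → ℚ) : Prop :=
  ∃ t, ∃ l : ℚ, 0 < l ∧ l ≤ 1 ∧ (∀ p, l * (N.pre t p : ℚ) ≤ m p) ∧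
    ∀ p, m' p = m p + l * ((N.post t p : ℚ) - (N.pre t p : ℚ))

def creach (N : PetriNet P T) : (P → ℚ) → (P → ℚ) → Prop := Relation.ReflTransGen N.cfires

def bounded (N : PetriNet P T) (m : P → ℕ) : Prop :=
  ∃ b : ℕ, ∀ m', N.reach m m' → ∀ p, m' p ≤ b

def zbounded (N : PetriNet P T) (m : P → ℕ) : Prop :=
  ∃ b : ℕ, ∀ m' : P → ℤ, N.zreach (fun p => (m p : ℤ)) m' → (∀ p, 0 ≤ m' p) →
    ∀ p, m' p ≤ (b : ℤ)

def quasiLive (N : PetriNet P T) (m : P → ℕ) (t : T) : Prop :=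
  ∃ m', N.reach m m' ∧ N.enabled t m'

def live (N : PetriNet P T) (m : P → ℕ) (t : T) : Prop :=
  ∀ m', N.reach m m' → N.quasiLive m' t

def freeChoice (N : PetriNet P T) : Prop :=
  ∀ s t : T, (∀ p, N.pre s p = 0 ∨ N.pre t p = 0) ∨ N.pre s = N.pre t

def edge (N : PetriNet P T) : (P ⊕ T) → (P ⊕ T) → Prop
  | Sum.inl p, Sum.inr t => 0 < N.pre t p
  | Sum.inr t, Sum.inl p => 0 < N.post t p
  | _, _ => False

end PetriNet

/-- The marking with `k` tokens in place `p` and none elsewhere. -/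
def mk1 (p : P) (k : ℕ) : P → ℕ := fun q => if q = p then k else 0

/-- The continuous marking with `k` tokens in place `p` and none elsewhere. -/
def mkQ (p : P) (k : ℚ) : P → ℚ := fun q => if q = p then k else 0

/-- `k`-soundness of a Petri net with designated initial and final places. -/
def ksoundAt (N : PetriNet P T) (i f : P) (k : ℕ) : Prop :=
  ∀ m, N.reach (mk1 i k) m → N.reach m (mk1 f k)

inductive Pl14 | i | u | d | f
deriving DecidableEq

instance instFintypePl14 : Fintype Pl14 :=
  ⟨{Pl14.i, Pl14.u, Pl14.d, Pl14.f}, fun x => by cases x <;> simp⟩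

inductive Tr14 | ti | tu | td
deriving DecidableEq

instance instFintypeTr14 : Fintype Tr14 :=
  ⟨{Tr14.ti, Tr14.tu, Tr14.td}, fun x => by cases x <;> simp⟩

def N14 (c : ℕ) : PetriNet Pl14 Tr14 where
  pre := fun t q => match t, q with
    | .ti, .i => 1
    | .tu, .u => c
    | .tu, .d => 1
    | .td, .d => 2
    | _, _ => 0
  post := fun t q => match t, q with
    | .ti, .u => 1
    | .ti, .d => 1
    | .tu, .f => 1
    | .td, .d => 1
    | .td, .f => 1
    | _, _ => 0

namespace PetriNet

variable {P T : Type} [Fintype P] [Fintype T]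

theorem fires_add_pre_post (N : PetriNet P T) (t : T) (m : P → ℕ) :
    N.fires (m + N.pre t) (m + N.post t) :=
  ⟨t, fun p => by simp, fun p => by simp; omega⟩

variable {N : PetriNet P T} {m m' : P → ℕ}

theorem fires.add (h : N.fires m m') (z : P → ℕ) : N.fires (m + z) (m' + z) := by
  obtain ⟨t, hen, heq⟩ := h
  refine ⟨t, fun p => (hen p).trans (by simp), fun p => ?_⟩
  have := hen p
  simp only [Pi.add_apply, heq p]
  omega

theorem reach.add (h : N.reach m m') (z : P → ℕ) : N.reach (m + z) (m' + z) :=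
  h.lift (· + z) fun _ _ hf => hf.add z

theorem reach_add_nsmul {y δ ε : P → ℕ} (h : N.fires (y + δ) (y + ε)) (n : ℕ) :
    N.reach (y + n • δ) (y + n • ε) := by
  induction n with
  | zero =>
    simp only [zero_smul, add_zero]
    exact .refl
  | succ n ih =>
    have hfire : N.fires (y + (n + 1) • δ) (y + n • δ + ε) := by
      simpa only [succ_nsmul', add_assoc, add_left_comm _ ε, add_comm ε] using h.add (n • δ)
    rw [succ_nsmul ε, ← add_assoc]
    exact .head hfire (ih.add ε)

theorem reach.marking_equation (h : N.reach m m') :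
    ∃ x : T → ℕ, ∀ p, m' p + ∑ t, x t * N.pre t p = m p + ∑ t, x t * N.post t p := by
  classical
  induction h with
  | refl => exact ⟨0, by simp⟩
  | tail _ hf ih =>
    obtain ⟨x, hx⟩ := ih
    obtain ⟨t, hen, heq⟩ := hf
    refine ⟨x + Pi.single t 1, fun p => ?_⟩
    have := hen p
    have := hx p
    simp only [Pi.add_apply, add_mul, Finset.sum_add_distrib, Pi.single_apply, ite_mul, one_mul,
      zero_mul, Finset.sum_ite_eq', Finset.mem_univ, if_true, heq p]
    omega

theorem reach.eq_of_forall_not_fires (h : N.reach m m') (hdead : ∀ m'', ¬ N.fires m m'') :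
    m = m' := by
  rcases h.cases_head with rfl | ⟨_, hf, -⟩
  · rfl
  · exact (hdead _ hf).elim

end PetriNet

namespace N14

def marking (a u d f : ℕ) : Pl14 → ℕ
  | .i => a | .u => u | .d => d | .f => f

theorem marking_add (a u d f a' u' d' f' : ℕ) :
    marking a u d f + marking a' u' d' f' = marking (a + a') (u + u') (d + d') (f + f') := by
  funext p; cases p <;> rfl

theorem nsmul_marking (n a u d f : ℕ) :
    n • marking a u d f = marking (n * a) (n * u) (n * d) (n * f) := by
  funext p; cases p <;> rfl

theorem marking_inj {a u d f a' u' d' f' : ℕ} :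
    marking a u d f = marking a' u' d' f' ↔ a = a' ∧ u = u' ∧ d = d' ∧ f = f' := by
  refine ⟨fun h => ⟨congrFun h .i, congrFun h .u, congrFun h .d, congrFun h .f⟩, ?_⟩
  rintro ⟨rfl, rfl, rfl, rfl⟩
  rfl

theorem mk1_i (k : ℕ) : mk1 Pl14.i k = marking k 0 0 0 := by
  funext p; cases p <;> rfl

theorem mk1_f (k : ℕ) : mk1 Pl14.f k = marking 0 0 0 k := by
  funext p; cases p <;> rfl

variable {c n : ℕ}

theorem sum_univ_tr14 {M : Type} [AddCommMonoid M] (g : Tr14 → M) :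
    ∑ t, g t = g .ti + g .tu + g .td := by
  simp [Finset.univ, Fintype.elems, add_assoc]

theorem dvd_of_reach {k : ℕ} (h : (N14 c).reach (mk1 .i k) (mk1 .f k)) : c ∣ k := by
  obtain ⟨x, hx⟩ := h.marking_equation
  have hi := hx .i
  have hu := hx .u
  simp only [mk1, reduceCtorEq, ↓reduceIte, N14, sum_univ_tr14, mul_one, mul_zero, add_zero,
    zero_add, Finset.sum_const_zero] at hi hu
  exact Dvd.intro_left _ (hu.trans hi)

theorem reach_mk1_i (k : ℕ) : (N14 c).reach (mk1 .i k) (marking 0 k k 0) := by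
  have hfire : (N14 c).fires (0 + marking 1 0 0 0) (0 + marking 0 1 1 0) := by
    convert (N14 c).fires_add_pre_post .ti 0 <;> funext p <;> cases p <;> rfl
  simpa only [mk1_i, nsmul_marking, marking_add, mul_one, mul_zero, zero_add] using
    PetriNet.reach_add_nsmul hfire k

theorem reach_tu (m : Pl14 → ℕ) (j : ℕ) :
    (N14 c).reach (m + marking 0 (j * c) j 0) (m + marking 0 0 0 j) := by
  have hfire : (N14 c).fires (m + marking 0 c 1 0) (m + marking 0 0 0 1) := by
    convert (N14 c).fires_add_pre_post .tu m <;> funext p <;> cases p <;> rfl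
  simpa only [nsmul_marking, marking_add, mul_one, mul_zero, add_zero, zero_add] using
    PetriNet.reach_add_nsmul hfire j

theorem reach_td (m : Pl14 → ℕ) (j : ℕ) :
    (N14 c).reach (m + marking 0 0 (j + 1) 0) (m + marking 0 0 1 j) := by
  -- `t_d` is read as moving a token from `d` to `f` while one more token stays in `d`
  have hfire : (N14 c).fires (m + marking 0 0 1 0 + marking 0 0 1 0)
      (m + marking 0 0 1 0 + marking 0 0 0 1) := by
    convert (N14 c).fires_add_pre_post .td m using 1 <;> rw [add_assoc] <;> congr 1 <;>
      funext p <;> cases p <;> rfl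
  simpa only [nsmul_marking, marking_add, mul_one, mul_zero, add_zero, zero_add, add_assoc,
    add_comm 1] using PetriNet.reach_add_nsmul hfire j

theorem reach_final (hc : 0 < c) (hn : 1 ≤ n) :
    (N14 c).reach (mk1 .i (n * c)) (mk1 .f (n * c)) := by
  have hk : n ≤ n * c := Nat.le_mul_of_pos_right n hc
  have fire_td :
      (N14 c).reach (marking 0 (n * c) (n * c) 0) (marking 0 (n * c) n (n * c - n)) := by
    convert reach_td (marking 0 (n * c) (n - 1) 0) (n * c - n) using 2
    all_goals (simp only [marking_add, marking_inj, true_and, and_true]; omega)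
  have fire_tu : (N14 c).reach (marking 0 (n * c) n (n * c - n)) (marking 0 0 0 (n * c)) := by
    convert reach_tu (marking 0 0 0 (n * c - n)) n using 2
    all_goals (simp only [marking_add, marking_inj, true_and]; omega)
  rw [mk1_f]
  exact ((reach_mk1_i _).trans fire_td).trans fire_tu

theorem reach_deadlock (hc : 2 ≤ c) (hn : 1 ≤ n) :
    (N14 c).reach (mk1 .i (n * c)) (marking 0 0 1 (n * c - 1)) := by
  have hk : 2 * n ≤ n * c := by nlinarith
  have fire_tu : (N14 c).reach (marking 0 (n * c) (n * c) 0) (marking 0 0 (n * c - n) n) := by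
    convert reach_tu (marking 0 0 (n * c - n) 0) n using 2
    all_goals (simp only [marking_add, marking_inj, true_and, and_true]; omega)
  have fire_td : (N14 c).reach (marking 0 0 (n * c - n) n) (marking 0 0 1 (n * c - 1)) := by
    convert reach_td (marking 0 0 0 n) (n * c - n - 1) using 2
    all_goals (simp only [marking_add, marking_inj, true_and]; omega)
  exact ((reach_mk1_i _).trans fire_tu).trans fire_td

theorem not_fires_marking_d_one (hc : 0 < c) (g : ℕ) (m : Pl14 → ℕ) :
    ¬ (N14 c).fires (marking 0 0 1 g) m := by
  rintro ⟨t, hen, -⟩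
  cases t
  · simpa [N14, marking] using hen .i
  · simpa [N14, marking] using (hen .u).trans_lt' hc
  · simpa [N14, marking] using hen .d

end N14

theorem stmt14 (c : ℕ) (hc : 2 ≤ c) :
    (∀ k : ℕ, ((N14 c).reach (mk1 Pl14.i k) (mk1 Pl14.f k) ∧ 1 ≤ k ↔
      ∃ m : ℕ, 1 ≤ m ∧ k = m * c)) ∧
    ¬ ∃ k : ℕ, 1 ≤ k ∧ ksoundAt (N14 c) Pl14.i Pl14.f k := by
  have quasiSound : ∀ k : ℕ, (N14 c).reach (mk1 Pl14.i k) (mk1 Pl14.f k) ∧ 1 ≤ k ↔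
      ∃ m : ℕ, 1 ≤ m ∧ k = m * c := by
    refine fun k => ⟨fun ⟨h, hk⟩ => ?_, fun ⟨m, hm, hk⟩ => ?_⟩
    · obtain ⟨m, rfl⟩ := N14.dvd_of_reach h
      exact ⟨m, Nat.pos_of_mul_pos_left hk, mul_comm c m⟩
    · subst hk
      exact ⟨N14.reach_final (by omega) hm, Nat.mul_pos hm (by omega)⟩
  refine ⟨quasiSound, fun ⟨k, hk, hsound⟩ => ?_⟩
  obtain ⟨m, hm, rfl⟩ := (quasiSound k).1 ⟨hsound _ .refl, hk⟩
  have hdead := (hsound _ (N14.reach_deadlock hc hm)).eq_of_forall_not_fires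
    (N14.not_fires_marking_d_one (by omega) _)
  simpa [N14.marking, mk1] using congrFun hdead .d
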